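/- Let G_m be a bounded Vilenkin group, α ∈ (0,1), and M_A ≤ n < M_{A+1}. Then the (C,−α) Cesàro kernel K_n^{−α}(x) = (1/A_{n−1}^{−α}) Σ_{ν=0}^{n−1} A_{n−1−ν}^{−α} ψ_ν(x) satisfies |K_n^{−α}(x)| ≤ (c(α)/|A_{n−1}^{−α}|) Σ_{l=0}^{A} M_l^{−α} D_{M_l}(x) for all x ∈ G_m, where c(α) depends only on α and the bound sup_k m_k. -/

import Mathlib

open scoped BigOperators
open Complex MeasureTheory

noncomputable section
namespace Vilenkin

/-- The generalized powers `M 0 = 1`, `M (k+1) = m k * M k`. -/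
def M (m : ℕ → ℕ) : ℕ → ℕ
  | 0 => 1
  | k + 1 => m k * M m k

/-- The Vilenkin group: complete direct product of the cyclic groups `ZMod (m k)`. -/
abbrev G (m : ℕ → ℕ) := ∀ k, ZMod (m k)

instance (n : ℕ) : MeasurableSpace (ZMod n) := ⊤
instance (n : ℕ) : TopologicalSpace (ZMod n) := ⊥

/-- `k`-th digit of `n` in the generalized number system based on `m`. -/
def dig (m : ℕ → ℕ) (n k : ℕ) : ℕ := (n / M m k) % m k

/-- The generalized Rademacher functions. -/
def rad (m : ℕ → ℕ) (k : ℕ) (x : G m) : ℂ :=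
  Complex.exp (2 * Real.pi * Complex.I * ((x k).val : ℝ) / (m k : ℝ))

/-- The Vilenkin functions. -/
def psi (m : ℕ → ℕ) (n : ℕ) (x : G m) : ℂ :=
  ∏ k ∈ Finset.range (n + 1), rad m k x ^ dig m n k

/-- The Dirichlet kernels. -/
def D (m : ℕ → ℕ) (n : ℕ) (x : G m) : ℂ := ∑ j ∈ Finset.range n, psi m j x

/-- The basic neighbourhood `I_k = {y : y_0 = ⋯ = y_{k-1} = 0}`. -/
def Icyl (m : ℕ → ℕ) (k : ℕ) : Set (G m) := {y | ∀ j < k, y j = 0}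

/-- The coset representative `Z_β^{(k)}`, supported on coordinates `< k`,
with `β = ∑_{j<k} x_j · (M_k / M_{j+1})`. -/
def Z (m : ℕ → ℕ) (k β : ℕ) : G m :=
  fun j => if j < k then ((β / (M m k / M m (j + 1))) % m j : ℕ) else 0

/-- The `k`-th coordinate unit vector `e_k`. -/
def e (m : ℕ → ℕ) (k : ℕ) : G m := fun j => if j = k then 1 else 0

/-- Cesàro numbers `A_0^α = 1`, `A_n^α = (α+1)⋯(α+n)/n!`. -/
def A (α : ℝ) (n : ℕ) : ℝ := ∏ j ∈ Finset.range n, (α + j + 1) / (j + 1)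

/-- Partial value `n^{(k-1)} = ∑_{j<k} n_j M_j` of the expansion of `n`. -/
def npart (m : ℕ → ℕ) (n k : ℕ) : ℕ := ∑ j ∈ Finset.range k, dig m n j * M m j

/-- `μ` is the (normalized Haar) probability measure on `G m` iff it gives each
cylinder of depth `k` measure `1 / M_k`. -/
def IsHaar (m : ℕ → ℕ) (μ : Measure (G m)) : Prop :=
  IsProbabilityMeasure μ ∧
    ∀ (k : ℕ) (z : G m), μ {y | ∀ j < k, y j = z j} = 1 / (M m k : ENNReal)

/-- The `(C,a)` Cesàro kernel `K_n^{a}`. -/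
def K (m : ℕ → ℕ) (a : ℝ) (n : ℕ) (x : G m) : ℂ :=
  (A a (n - 1) : ℂ)⁻¹ * ∑ ν ∈ Finset.range n, (A a (n - 1 - ν) : ℝ) * psi m ν x

/-- Vilenkin-Fourier coefficients. -/
def fhat (m : ℕ → ℕ) (μ : Measure (G m)) (f : G m → ℂ) (k : ℕ) : ℂ :=
  ∫ t, f t * (starRingEnd ℂ) (psi m k t) ∂μ

/-- Partial sums of the Vilenkin-Fourier series. -/
def S (m : ℕ → ℕ) (μ : Measure (G m)) (f : G m → ℂ) (n : ℕ) (x : G m) : ℂ :=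
  ∑ k ∈ Finset.range n, fhat m μ f k * psi m k x

/-- The `(C, a)` Cesàro means of the Vilenkin-Fourier series,
`σ_n^{a} f = (1/A_{n-1}^{a}) ∑_{ν=0}^{n} A_{n-ν}^{a-1} S_ν f`. -/
def ces (m : ℕ → ℕ) (μ : Measure (G m)) (a : ℝ) (n : ℕ) (f : G m → ℂ) (x : G m) : ℂ :=
  (A a (n - 1) : ℂ)⁻¹ * ∑ ν ∈ Finset.range (n + 1), (A (a - 1) (n - ν) : ℝ) * S m μ f ν x

/-- Oscillation of `f` on the set `E`. -/
def osc {m : ℕ → ℕ} (f : G m → ℂ) (E : Set (G m)) : ℝ :=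
  ⨆ p : E × E, ‖f p.1 - f p.2‖

/-- `ν(M_k, f) = ∑_{β=0}^{M_k-1} ω(f, I_k + Z_β^{(k)})`. -/
def nu (m : ℕ → ℕ) (f : G m → ℂ) (k : ℕ) : ℝ :=
  ∑ β ∈ Finset.range (M m k), osc f ((Z m k β + ·) '' Icyl m k)

end Vilenkin

/-!
Let `s ≤ A` be the first index with `x_s ≠ 0`, or `s = A` if there is none. Then `x ∈ I_s`, so
`D_{M_s}(x) = M_s` and the right-hand side is at least `M_s^{1-α}`. On `I_s` the value `ψ_ν(x)`
depends only on `⌊ν / M_s⌋`, so grouping the sum defining `K_n^{-α}` into blocks of length `M_s`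
leaves an Abel sum `∑_t b_t ψ_{t M_s}(x)` with increasing block weights
`b_t ≤ ∑_{k<M_s} A_k^{-α} ≤ M_s^{1-α}/(1-α)`, plus one incomplete block of at most that size.
The partial sums of `t ↦ ψ_{t M_s}(x)` are bounded by `m_s` when `x_s ≠ 0`, since every period of
`m_s` terms is a geometric sum of the root of unity `r_s(x) ≠ 1`, and by `n / M_A < m_A` when
`s = A`.
-/
lemma Finset.sum_range_mul_eq_sum_sum {E : Type*} [AddCommMonoid E] (f : ℕ → E) (Q L : ℕ) :
    ∑ ν ∈ Finset.range (Q * L), f ν =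
      ∑ t ∈ Finset.range Q, ∑ r ∈ Finset.range L, f (t * L + r) := by
  induction Q with
  | zero => simp
  | succ Q ih => rw [Nat.succ_mul, Finset.sum_range_add, ih, Finset.sum_range_succ]

lemma norm_sum_smul_le_of_monotone {E : Type*} [SeminormedAddCommGroup E] [NormedSpace ℝ E]
    {b : ℕ → ℝ} (hb : Monotone b) (hb0 : 0 ≤ b 0) {z : ℕ → E} {N : ℕ} {P : ℝ}
    (hz : ∀ T ≤ N, ‖∑ t ∈ Finset.range T, z t‖ ≤ P) :
    ‖∑ t ∈ Finset.range N, b t • z t‖ ≤ 2 * P * b (N - 1) := by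
  have hP : 0 ≤ P := (norm_nonneg _).trans (hz 0 (Nat.zero_le _))
  have hbN : 0 ≤ b (N - 1) := hb0.trans (hb (Nat.zero_le _))
  rw [Finset.sum_range_by_parts]
  calc _ ≤ ‖b (N - 1) • ∑ t ∈ Finset.range N, z t‖ + ∑ i ∈ Finset.range (N - 1),
          ‖(b (i + 1) - b i) • ∑ t ∈ Finset.range (i + 1), z t‖ :=
        (norm_sub_le _ _).trans (by gcongr; exact norm_sum_le _ _)
    _ ≤ b (N - 1) * P + ∑ i ∈ Finset.range (N - 1), (b (i + 1) - b i) * P := by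
        simp only [norm_smul, Real.norm_eq_abs]
        refine add_le_add ?_ (Finset.sum_le_sum fun i hi => ?_)
        · rw [abs_of_nonneg hbN]
          exact mul_le_mul_of_nonneg_left (hz N le_rfl) hbN
        · have hbi : 0 ≤ b (i + 1) - b i := sub_nonneg.mpr (hb (Nat.le_succ i))
          rw [abs_of_nonneg hbi]
          exact mul_le_mul_of_nonneg_left (hz _ (by simp at hi; omega)) hbi
    _ = (2 * b (N - 1) - b 0) * P := by rw [← Finset.sum_mul, Finset.sum_range_sub]; ring
    _ ≤ 2 * P * b (N - 1) := by nlinarith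

lemma one_sub_mul_le_one_add_rpow_neg {b α : ℝ} (hb : 0 ≤ b) (hα0 : 0 ≤ α)
    (hα1 : α ≤ 1) :
    1 - α * b ≤ (1 + b) ^ (-α) := by
  have hpos : 0 < (1 + b) ^ α := Real.rpow_pos_of_pos (by linarith) α
  have hbern := rpow_one_add_le_one_add_mul_self (by linarith : -1 ≤ b) hα0 hα1
  rw [Real.rpow_neg (by linarith), ← one_div, le_div_iff₀ hpos]
  nlinarith [mul_nonneg hα0 hb, sq_nonneg (α * b)]

lemma rpow_neg_le_sub_rpow_div {y α : ℝ} (hy : 1 ≤ y) (hα0 : 0 ≤ α) (hα1 : α < 1) :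
    y ^ (-α) ≤ (y ^ (1 - α) - (y - 1) ^ (1 - α)) / (1 - α) := by
  have hy0 : 0 < y := by linarith
  have hinv : y⁻¹ ≤ 1 := inv_le_one_of_one_le₀ hy
  have hbern := rpow_one_add_le_one_add_mul_self (by linarith : -1 ≤ -y⁻¹)
    (by linarith : 0 ≤ 1 - α) (by linarith : 1 - α ≤ 1)
  have hsplit : (y - 1) ^ (1 - α) = y ^ (1 - α) * (1 + -y⁻¹) ^ (1 - α) := by
    rw [← Real.mul_rpow hy0.le (by linarith)]
    congr 1
    field_simp
    ring
  have hneg : y ^ (-α) = y ^ (1 - α) * y⁻¹ := by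
    rw [show -α = 1 - α - 1 by ring, Real.rpow_sub_one hy0.ne', div_eq_mul_inv]
  rw [le_div_iff₀ (by linarith), hsplit, hneg]
  nlinarith [mul_le_mul_of_nonneg_left hbern (Real.rpow_nonneg hy0.le (1 - α))]

namespace Vilenkin

section Digits
variable {m : ℕ → ℕ}

lemma M_succ (k : ℕ) : M m (k + 1) = m k * M m k := rfl

lemma M_pos (hm : ∀ k, 2 ≤ m k) (k : ℕ) : 0 < M m k := by
  induction k with
  | zero => exact Nat.one_pos
  | succ k ih => exact Nat.mul_pos (by linarith [hm k]) ih

lemma M_monotone (hm : ∀ k, 2 ≤ m k) : Monotone (M m) :=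
  monotone_nat_of_le_succ fun k => Nat.le_mul_of_pos_left _ (by linarith [hm k])

lemma lt_M (hm : ∀ k, 2 ≤ m k) (k : ℕ) : k < M m k := by
  induction k with
  | zero => exact Nat.one_pos
  | succ k ih => rw [M_succ]; nlinarith [hm k]

lemma M_dvd_M {k l : ℕ} (h : k ≤ l) : M m k ∣ M m l := by
  induction l, h using Nat.le_induction with
  | base => exact dvd_rfl
  | succ l _ ih => exact ih.mul_left _

lemma dig_eq_zero_of_lt {n k : ℕ} (h : n < M m k) : dig m n k = 0 := by
  simp [dig, Nat.div_eq_of_lt h]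

lemma dig_mul_M_add_of_lt (hm : ∀ k, 2 ≤ m k) {s k : ℕ} (hk : k < s) (t r : ℕ) :
    dig m (t * M m s + r) k = dig m r k := by
  obtain ⟨c, hc⟩ := M_dvd_M (m := m) (Nat.succ_le_of_lt hk)
  rw [dig, dig, hc, M_succ, add_comm, show t * (m k * M m k * c) = (t * m k * c) * M m k by ring,
    Nat.add_mul_div_right _ _ (M_pos hm k), show t * m k * c = m k * (t * c) by ring,
    Nat.add_mul_mod_self_left]

lemma dig_mul_M_of_lt (hm : ∀ k, 2 ≤ m k) {s k : ℕ} (hk : k < s) (t : ℕ) :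
    dig m (t * M m s) k = 0 := by
  simpa [dig_eq_zero_of_lt (M_pos hm k)] using dig_mul_M_add_of_lt hm hk t 0

lemma dig_mul_M_add_of_le (hm : ∀ k, 2 ≤ m k) {s k t r : ℕ} (hk : s ≤ k) (hr : r < M m s) :
    dig m (t * M m s + r) k = dig m (t * M m s) k := by
  obtain ⟨c, hc⟩ := M_dvd_M (m := m) hk
  have hs := M_pos hm s
  rw [dig, dig, hc, ← Nat.div_div_eq_div_mul, ← Nat.div_div_eq_div_mul, mul_comm t,
    Nat.mul_add_div hs, Nat.div_eq_of_lt hr, add_zero, Nat.mul_div_cancel_left _ hs]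

lemma dig_mul_M_self (hm : ∀ k, 2 ≤ m k) {s u : ℕ} (hu : u < m s) :
    dig m (u * M m s) s = u := by
  rw [dig, Nat.mul_div_cancel _ (M_pos hm s), Nat.mod_eq_of_lt hu]

end Digits

section Characters
variable {m : ℕ → ℕ}

lemma rad_eq_pow (k : ℕ) (x : G m) :
    rad m k x = Complex.exp (2 * Real.pi * Complex.I / m k) ^ (x k).val := by
  rw [rad, ← Complex.exp_nat_mul]
  congr 1
  push_cast
  ring

lemma isPrimitiveRoot_rad_base (hm : ∀ k, 2 ≤ m k) (k : ℕ) :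
    IsPrimitiveRoot (Complex.exp (2 * Real.pi * Complex.I / m k)) (m k) :=
  Complex.isPrimitiveRoot_exp _ (by linarith [hm k])

lemma norm_rad (hm : ∀ k, 2 ≤ m k) (k : ℕ) (x : G m) : ‖rad m k x‖ = 1 := by
  rw [rad_eq_pow, norm_pow, (isPrimitiveRoot_rad_base hm k).norm'_eq_one (by linarith [hm k]),
    one_pow]

lemma rad_pow_self (hm : ∀ k, 2 ≤ m k) (k : ℕ) (x : G m) : rad m k x ^ m k = 1 := by
  rw [rad_eq_pow, pow_right_comm, (isPrimitiveRoot_rad_base hm k).pow_eq_one, one_pow]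

lemma rad_eq_one_iff (hm : ∀ k, 2 ≤ m k) {k : ℕ} {x : G m} : rad m k x = 1 ↔ x k = 0 := by
  have : NeZero (m k) := ⟨by linarith [hm k]⟩
  rw [rad_eq_pow, (isPrimitiveRoot_rad_base hm k).pow_eq_one_iff_dvd, ← ZMod.val_eq_zero]
  exact ⟨fun h => Nat.eq_zero_of_dvd_of_lt h (ZMod.val_lt _), fun h => h ▸ dvd_zero _⟩

lemma norm_psi (hm : ∀ k, 2 ≤ m k) (n : ℕ) (x : G m) : ‖psi m n x‖ = 1 := by
  simp [psi, norm_rad hm]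

lemma psi_eq_prod_range (hm : ∀ k, 2 ≤ m k) {n N : ℕ} (h : n < N) (x : G m) :
    psi m n x = ∏ k ∈ Finset.range N, rad m k x ^ dig m n k := by
  refine Finset.prod_subset (Finset.range_subset_range.mpr h) fun k _ hk => ?_
  rw [Finset.mem_range, not_lt] at hk
  rw [dig_eq_zero_of_lt ((Nat.lt_of_succ_le hk).trans (lt_M hm k)), pow_zero]

lemma psi_mul_M_add (hm : ∀ k, 2 ≤ m k) {s r : ℕ} (t : ℕ) (hr : r < M m s) (x : G m) :
    psi m (t * M m s + r) x = psi m (t * M m s) x * psi m r x := by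
  have hN : ∀ n ≤ t * M m s + r, n < t * M m s + r + 1 := fun _ h => Nat.lt_succ_of_le h
  rw [psi_eq_prod_range hm (hN _ le_rfl), psi_eq_prod_range hm (hN _ (Nat.le_add_right _ _)),
    psi_eq_prod_range hm (hN _ (Nat.le_add_left _ _)), ← Finset.prod_mul_distrib]
  refine Finset.prod_congr rfl fun k _ => ?_
  rw [← pow_add]
  rcases lt_or_ge k s with hk | hk
  · rw [dig_mul_M_add_of_lt hm hk, dig_mul_M_of_lt hm hk, zero_add]
  · rw [dig_mul_M_add_of_le hm hk hr, dig_eq_zero_of_lt (hr.trans_le (M_monotone hm hk)),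
      add_zero]

lemma psi_mul_M (hm : ∀ k, 2 ≤ m k) {s u : ℕ} (hu : u < m s) (x : G m) :
    psi m (u * M m s) x = rad m s x ^ u := by
  have huM : u * M m s < M m (s + 1) := Nat.mul_lt_mul_of_pos_right hu (M_pos hm s)
  rw [psi_eq_prod_range hm (show u * M m s < u * M m s + s + 1 by omega),
    Finset.prod_eq_single s, dig_mul_M_self hm hu]
  · intro k _ hks
    rcases lt_or_gt_of_ne hks with hk | hk
    · rw [dig_mul_M_of_lt hm hk, pow_zero]
    · rw [dig_eq_zero_of_lt (huM.trans_le (M_monotone hm hk)), pow_zero]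
  · exact fun hs => absurd (Finset.mem_range.mpr (by omega)) hs

lemma psi_eq_one_of_mem_Icyl (hm : ∀ k, 2 ≤ m k) {s r : ℕ} {x : G m} (hx : x ∈ Icyl m s)
    (hr : r < M m s) : psi m r x = 1 := by
  refine Finset.prod_eq_one fun k _ => ?_
  rcases lt_or_ge k s with hk | hk
  · rw [(rad_eq_one_iff hm).mpr (hx k hk), one_pow]
  · rw [dig_eq_zero_of_lt (hr.trans_le (M_monotone hm hk)), pow_zero]

end Characters

section CesaroNumbers

lemma A_succ (β : ℝ) (k : ℕ) : A β (k + 1) = A β k * ((β + k + 1) / (k + 1)) :=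
  Finset.prod_range_succ _ _

lemma A_pos {β : ℝ} (hβ : -1 < β) (k : ℕ) : 0 < A β k :=
  Finset.prod_pos fun j _ => div_pos (by linarith [j.cast_nonneg (α := ℝ)]) (by positivity)

lemma A_antitone {β : ℝ} (hβ1 : -1 < β) (hβ0 : β ≤ 0) : Antitone (A β) :=
  antitone_nat_of_succ_le fun k => by
    rw [A_succ]
    exact mul_le_of_le_one_right (A_pos hβ1 k).le ((div_le_one (by positivity)).mpr (by linarith))

lemma A_neg_le_rpow {α : ℝ} (hα0 : 0 ≤ α) (hα1 : α ≤ 1) (k : ℕ) :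
    A (-α) k ≤ ((k : ℝ) + 1) ^ (-α) := by
  induction k with
  | zero => simp [A]
  | succ k ih =>
    have hk : (0 : ℝ) < k + 1 := by positivity
    have hfactor : (-α + k + 1) / (k + 1) = 1 - α * (k + 1 : ℝ)⁻¹ := by field_simp; ring
    calc A (-α) (k + 1) = A (-α) k * (1 - α * (k + 1 : ℝ)⁻¹) := by rw [A_succ, hfactor]
      _ ≤ ((k : ℝ) + 1) ^ (-α) * (1 + (k + 1 : ℝ)⁻¹) ^ (-α) := by
          gcongr
          · rw [← hfactor]; exact div_nonneg (by linarith [k.cast_nonneg (α := ℝ)]) hk.le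
          · exact one_sub_mul_le_one_add_rpow_neg (by positivity) hα0 hα1
      _ = (((k + 1 : ℕ) : ℝ) + 1) ^ (-α) := by
          rw [← Real.mul_rpow hk.le (by positivity)]
          congr 1
          field_simp
          push_cast
          ring

lemma sum_A_neg_le {α : ℝ} (hα0 : 0 ≤ α) (hα1 : α < 1) (N : ℕ) :
    ∑ k ∈ Finset.range N, A (-α) k ≤ (N : ℝ) ^ (1 - α) / (1 - α) := by
  calc ∑ k ∈ Finset.range N, A (-α) k
      ≤ ∑ k ∈ Finset.range N,
          (((k + 1 : ℕ) : ℝ) ^ (1 - α) - (k : ℝ) ^ (1 - α)) / (1 - α) := by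
        refine Finset.sum_le_sum fun k _ => (A_neg_le_rpow hα0 hα1.le k).trans ?_
        simpa using rpow_neg_le_sub_rpow_div (by simp : (1 : ℝ) ≤ k + 1) hα0 hα1
    _ = (N : ℝ) ^ (1 - α) / (1 - α) := by
        rw [← Finset.sum_div, Finset.sum_range_sub (fun k => (k : ℝ) ^ (1 - α))]
        simp [Real.zero_rpow (by linarith : 1 - α ≠ 0)]

end CesaroNumbers

section Kernel
variable {m : ℕ → ℕ}

lemma D_M_eq_of_mem_Icyl (hm : ∀ k, 2 ≤ m k) {s : ℕ} {x : G m} (hx : x ∈ Icyl m s) :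
    D m (M m s) x = M m s := by
  rw [D, Finset.sum_congr rfl fun r hr => psi_eq_one_of_mem_Icyl hm hx (Finset.mem_range.mp hr)]
  simp

lemma rpow_M_le_sum_D (hm : ∀ k, 2 ≤ m k) (α : ℝ) {s A' : ℕ} (hs : s ≤ A') {x : G m}
    (hx : x ∈ Icyl m s) :
    (M m s : ℝ) ^ (1 - α) ≤
      ∑ l ∈ Finset.range (A' + 1), (M m l : ℝ) ^ (-α) * ‖D m (M m l) x‖ := by
  have hM : (M m s : ℝ) ≠ 0 := by exact_mod_cast (M_pos hm s).ne'
  have hterm : (M m s : ℝ) ^ (-α) * ‖D m (M m s) x‖ = (M m s : ℝ) ^ (1 - α) := by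
    rw [D_M_eq_of_mem_Icyl hm hx, Complex.norm_natCast, sub_eq_neg_add, Real.rpow_add_one hM]
  rw [← hterm]
  exact Finset.single_le_sum (f := fun l => (M m l : ℝ) ^ (-α) * ‖D m (M m l) x‖)
    (fun l _ => by positivity) (Finset.mem_range.mpr (Nat.lt_succ_of_le hs))

lemma norm_sum_psi_mul_M_le (hm : ∀ k, 2 ≤ m k) {s : ℕ} {x : G m} (hx : x s ≠ 0) (T : ℕ) :
    ‖∑ t ∈ Finset.range T, psi m (t * M m s) x‖ ≤ m s := by
  have hperiod : ∀ v, ∑ u ∈ Finset.range (m s), psi m ((v * m s + u) * M m s) x = 0 := by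
    intro v
    have hterm : ∀ u ∈ Finset.range (m s),
        psi m ((v * m s + u) * M m s) x = psi m (v * M m (s + 1)) x * rad m s x ^ u := by
      intro u hu
      have hu := Finset.mem_range.mp hu
      rw [show (v * m s + u) * M m s = v * M m (s + 1) + u * M m s by rw [M_succ]; ring,
        psi_mul_M_add hm _ (by rw [M_succ]; exact Nat.mul_lt_mul_of_pos_right hu (M_pos hm s)),
        psi_mul_M hm hu]
    rw [Finset.sum_congr rfl hterm, ← Finset.mul_sum,
      geom_sum_eq ((rad_eq_one_iff hm).not.mpr hx), rad_pow_self hm, sub_self, zero_div, mul_zero]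
  rw [← Nat.div_add_mod' T (m s), Finset.sum_range_add, Finset.sum_range_mul_eq_sum_sum,
    Finset.sum_eq_zero fun v _ => hperiod v, zero_add]
  calc _ ≤ ∑ r ∈ Finset.range (T % m s), ‖psi m ((T / m s * m s + r) * M m s) x‖ :=
        norm_sum_le _ _
    _ = (T % m s : ℕ) := by simp [norm_psi hm]
    _ ≤ m s := by exact_mod_cast (Nat.mod_lt T (by linarith [hm s])).le

end Kernel

section Estimate
variable {m : ℕ → ℕ}

lemma exists_le_mem_Icyl_and_ne_zero_or_eq (x : G m) (A' : ℕ) :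
    ∃ s ≤ A', x ∈ Icyl m s ∧ (x s ≠ 0 ∨ s = A') := by
  classical
  have h : ∃ j, x j ≠ 0 ∨ j = A' := ⟨A', Or.inr rfl⟩
  refine ⟨Nat.find h, Nat.find_min' h (Or.inr rfl), fun j hj => ?_, Nat.find_spec h⟩
  simpa using (not_or.mp (Nat.find_min h hj)).1

lemma norm_sum_psi_mul_M_le_of_ne_zero_or_eq (hm : ∀ k, 2 ≤ m k) {B A' n s : ℕ}
    (hB : ∀ k, m k ≤ B) (hn : n < M m (A' + 1)) {x : G m} (hs : x s ≠ 0 ∨ s = A') {T : ℕ}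
    (hT : T ≤ n / M m s) :
    ‖∑ t ∈ Finset.range T, psi m (t * M m s) x‖ ≤ B := by
  rcases hs with hxs | rfl
  · exact (norm_sum_psi_mul_M_le hm hxs T).trans (by exact_mod_cast hB s)
  · have hTm : T < m s := hT.trans_lt ((Nat.div_lt_iff_lt_mul (M_pos hm s)).mpr hn)
    calc _ ≤ ∑ t ∈ Finset.range T, ‖psi m (t * M m s) x‖ := norm_sum_le _ _
      _ = T := by simp [norm_psi hm]
      _ ≤ B := by exact_mod_cast (hTm.trans_le (hB s)).le

lemma sum_mul_psi_eq_sum_blocks (hm : ∀ k, 2 ≤ m k) {s : ℕ} {x : G m} (hx : x ∈ Icyl m s)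
    (w : ℕ → ℝ) (Q : ℕ) :
    ∑ ν ∈ Finset.range (Q * M m s), (w ν : ℂ) * psi m ν x =
      ∑ t ∈ Finset.range Q,
        (∑ r ∈ Finset.range (M m s), w (t * M m s + r)) • psi m (t * M m s) x := by
  rw [Finset.sum_range_mul_eq_sum_sum]
  refine Finset.sum_congr rfl fun t _ => ?_
  rw [Complex.real_smul, Complex.ofReal_sum, Finset.sum_mul]
  refine Finset.sum_congr rfl fun r hr => ?_
  have hr := Finset.mem_range.mp hr
  rw [psi_mul_M_add hm t hr, psi_eq_one_of_mem_Icyl hm hx hr, mul_one]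

lemma norm_sum_mul_psi_le (hm : ∀ k, 2 ≤ m k) {a : ℕ → ℝ} (ha : Antitone a)
    (ha0 : ∀ k, 0 ≤ a k) {s n : ℕ} {P : ℝ} {x : G m} (hx : x ∈ Icyl m s)
    (hsn : M m s ≤ n)
    (hP : ∀ T ≤ n / M m s, ‖∑ t ∈ Finset.range T, psi m (t * M m s) x‖ ≤ P) :
    ‖∑ ν ∈ Finset.range n, (a (n - 1 - ν) : ℂ) * psi m ν x‖ ≤
      (2 * P + 1) * ∑ k ∈ Finset.range (M m s), a k := by
  set L := M m s
  set Q := n / L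
  set S := ∑ k ∈ Finset.range L, a k
  have hL : 0 < L := M_pos hm s
  have hn : Q * L + n % L = n := Nat.div_add_mod' n L
  have hQL : (Q - 1) * L + L = Q * L := by
    rw [Nat.sub_one_mul]
    have : L ≤ Q * L := Nat.le_mul_of_pos_left L ((Nat.one_le_div_iff hL).mpr hsn)
    omega
  set b : ℕ → ℝ := fun t => ∑ r ∈ Finset.range L, a (n - 1 - (t * L + r))
  have hb : Monotone b := fun t t' htt' => Finset.sum_le_sum fun r _ => ha <| by
    have := Nat.mul_le_mul_right L htt'; omega
  have hbQ : b (Q - 1) ≤ S :=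
    calc b (Q - 1) ≤ ∑ r ∈ Finset.range L, a (L - 1 - r) :=
          Finset.sum_le_sum fun r hr => ha (by simp at hr; omega)
      _ = S := Finset.sum_range_reflect a L
  have htail :
      ‖∑ r ∈ Finset.range (n % L), (a (n - 1 - (Q * L + r)) : ℂ) * psi m (Q * L + r) x‖
        ≤ S := by
    calc _ ≤ ∑ r ∈ Finset.range (n % L), a (n % L - 1 - r) := by
          refine (norm_sum_le _ _).trans (Finset.sum_le_sum fun r hr => ?_)
          rw [norm_mul, norm_psi hm, mul_one, Complex.norm_real, Real.norm_of_nonneg (ha0 _)]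
          exact le_of_eq (congrArg a (by simp at hr; omega))
      _ = ∑ k ∈ Finset.range (n % L), a k := Finset.sum_range_reflect a _
      _ ≤ S := Finset.sum_le_sum_of_subset_of_nonneg
          (Finset.range_subset_range.mpr (Nat.mod_lt n hL).le) fun k _ _ => ha0 k
  have hblocks : ∑ ν ∈ Finset.range (Q * L), (a (n - 1 - ν) : ℂ) * psi m ν x =
      ∑ t ∈ Finset.range Q, b t • psi m (t * L) x :=
    sum_mul_psi_eq_sum_blocks hm hx _ Q
  have hP0 : 0 ≤ P := (norm_nonneg _).trans (hP 0 (Nat.zero_le _))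
  have hS0 : 0 ≤ S := Finset.sum_nonneg fun k _ => ha0 k
  calc _ = ‖∑ t ∈ Finset.range Q, b t • psi m (t * L) x + ∑ r ∈ Finset.range (n % L),
          (a (n - 1 - (Q * L + r)) : ℂ) * psi m (Q * L + r) x‖ := by
        rw [← hblocks, ← Finset.sum_range_add, hn]
    _ ≤ 2 * P * b (Q - 1) + S :=
        (norm_add_le _ _).trans (add_le_add
          (norm_sum_smul_le_of_monotone hb (Finset.sum_nonneg fun r _ => ha0 _) hP) htail)
    _ ≤ (2 * P + 1) * S := by nlinarith

end Estimate

/-- Lemma 2: `|K_n^{−α}(x)| ≤ (c(α)/|A_{n−1}^{−α}|) ∑_{l=0}^{A} M_l^{−α} D_{M_l}(x)`. -/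
theorem lemma2 (α : ℝ) (hα0 : 0 < α) (hα1 : α < 1) (B : ℕ) :
    ∃ c : ℝ, 0 < c ∧ ∀ (m : ℕ → ℕ), (∀ k, 2 ≤ m k) → (∀ k, m k ≤ B) →
      ∀ (A' n : ℕ), M m A' ≤ n → n < M m (A' + 1) → ∀ x : G m,
        ‖K m (-α) n x‖ ≤
          c / |A (-α) (n - 1)| *
            ∑ l ∈ Finset.range (A' + 1),
              (M m l : ℝ) ^ (-α) * ‖D m (M m l) x‖ := by
  have hα : 0 < 1 - α := sub_pos.mpr hα1
  refine ⟨(2 * B + 1) / (1 - α), by positivity, fun m hm hB A' n hAn hnA x => ?_⟩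
  obtain ⟨s, hsA, hxs, hs⟩ := exists_le_mem_Icyl_and_ne_zero_or_eq x A'
  have hβ : -1 < -α := by linarith
  have hApos := A_pos hβ (n - 1)
  have hsum := norm_sum_mul_psi_le hm (A_antitone hβ (by linarith))
    (fun k => (A_pos hβ k).le) hxs ((M_monotone hm hsA).trans hAn)
    (fun T hT => norm_sum_psi_mul_M_le_of_ne_zero_or_eq hm hB hnA hs hT)
  calc ‖K m (-α) n x‖
      = ‖∑ ν ∈ Finset.range n, (A (-α) (n - 1 - ν) : ℂ) * psi m ν x‖ /
          A (-α) (n - 1) := by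
        rw [K, norm_mul, norm_inv, Complex.norm_real, Real.norm_of_nonneg hApos.le, inv_mul_eq_div]
    _ ≤ (2 * B + 1) * ((M m s : ℝ) ^ (1 - α) / (1 - α)) / A (-α) (n - 1) := by
        gcongr
        exact hsum.trans (by gcongr; exact sum_A_neg_le hα0.le hα1 _)
    _ = (2 * B + 1) / (1 - α) / |A (-α) (n - 1)| * (M m s : ℝ) ^ (1 - α) := by
        rw [abs_of_pos hApos]
        ring
    _ ≤ _ := by
        gcongr
        exact rpow_M_le_sum_D hm α hsA hxs

end Vilenkin
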